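/- Let i: L(Γ∖u) → L(Γ) be the inclusion induced by a subgraph obtained by deleting an end-vertex u with adjacent vertex w, and R: L'(Γ) → L'(Γ∖u) the dual restriction. Then R(E_v^{*,Γ}) = E_v^{*,Γ∖u} for v ≠ u, R(E_u^{*,Γ}) = 0, R(E_v^Γ) = E_v^{Γ∖u} for v ≠ u, and R(E_u^Γ) = -E_w^{*,Γ∖u}. -/
import Mathlib


open scoped BigOperators Matrix

section Defs

variable {V : Type*} [Fintype V] [DecidableEq V]

/-- The bilinear pairing `(x, y) = xᵀ M y` over `ℚ`, for an integer matrix `M`. -/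
def pairing (M : Matrix V V ℤ) (x y : V → ℚ) : ℚ :=
  x ⬝ᵥ (M.map fun m => (m : ℚ)).mulVec y

def NegDefinite (M : Matrix V V ℤ) : Prop :=
  ∀ x : V → ℚ, x ≠ 0 → pairing M x x < 0

def baseE (v : V) : V → ℚ := Pi.single v 1

/-- `Estar v` is the antidual basis: `(E_v^*, E_w) = -δ_{vw}`. -/
def IsAntidual (M : Matrix V V ℤ) (Estar : V → V → ℚ) : Prop :=
  ∀ v w, pairing M (Estar v) (baseE w) = if v = w then -1 else 0

def IsPlumbing (M : Matrix V V ℤ) : Prop :=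
  M.IsSymm ∧ NegDefinite M ∧ (∀ v w, v ≠ w → M v w = 0 ∨ M v w = 1) ∧
    (SimpleGraph.fromRel fun v w => M v w = 1).Connected

/-- The valency (number of neighbours) of a vertex. -/
def valency (M : Matrix V V ℤ) (v : V) : ℕ :=
  (Finset.univ.filter fun w => w ≠ v ∧ M v w = 1).card

def IsPlumbingTree (M : Matrix V V ℤ) : Prop :=
  IsPlumbing M ∧ ∑ v, valency M v = 2 * (Fintype.card V - 1)

/-- `k` is a characteristic element: `k ∈ L'` and `(k + l, l) ∈ 2ℤ` for all `l ∈ L`. -/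
def IsChar (M : Matrix V V ℤ) (k : V → ℚ) : Prop :=
  (∀ v, ∃ m : ℤ, pairing M k (baseE v) = m) ∧
  ∀ l : V → ℤ, ∃ m : ℤ, pairing M (k + fun v => (l v : ℚ)) (fun v => (l v : ℚ)) = 2 * m

/-- The canonical class, defined by adjunction: `(K + E_v, E_v) = -2`. -/
def IsCanonical (M : Matrix V V ℤ) (K : V → ℚ) : Prop :=
  ∀ v, pairing M (K + baseE v) (baseE v) = -2

/-- The weight function `w(k) = -(k² + |V|)/8`. -/
def wfun (M : Matrix V V ℤ) (k : V → ℚ) : ℚ :=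
  -(pairing M k k + Fintype.card V) / 8

/-- The weight of the cube `(k, I')`: `max_{J ⊆ I'} w(k + 2Σ_{j∈J} E_j)`. -/
def cubeW (M : Matrix V V ℤ) (k : V → ℚ) (I' : Finset V) : ℚ :=
  I'.powerset.sup' (Finset.powerset_nonempty I') fun J => wfun M (k + 2 • ∑ j ∈ J, baseE j)

/-- `Σ_{I'⊆V} (-1)^{|I'|+1} w((k,I'))`. -/
def cubeSum (M : Matrix V V ℤ) (k : V → ℚ) : ℚ :=
  ∑ I' ∈ (Finset.univ : Finset V).powerset, (-1 : ℚ) ^ (I'.card + 1) * cubeW M k I'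

/-- The matrix of the graph with the vertex `u` deleted. -/
def delMat (M : Matrix V V ℤ) (u : V) : Matrix {v : V // v ≠ u} {v : V // v ≠ u} ℤ :=
  fun v w => M v.1 w.1

end Defs

/-- Extension by zero of a vector on the deleted-vertex index set. -/
def extZero {V : Type*} [DecidableEq V] {u : V} (x : {v : V // v ≠ u} → ℚ) : V → ℚ :=
  fun v => if h : v = u then 0 else x ⟨v, h⟩

section Aux
variable {V : Type*} [Fintype V] [DecidableEq V] {u : V}

lemma pairing_eq (M : Matrix V V ℤ) (x y : V → ℚ) :
    pairing M x y = ∑ v, ∑ w', x v * (M v w' : ℚ) * y w' := by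
  simp [pairing, dotProduct, Matrix.mulVec, Finset.mul_sum, mul_assoc]

lemma sum_ext (f : V → ℚ) (hf : f u = 0) :
    ∑ v, f v = ∑ v : {v : V // v ≠ u}, f v.1 := by
  rw [← Finset.sum_subtype (Finset.univ.filter (· ≠ u)) (by simp) (fun v => f v)]
  rw [Finset.sum_filter_of_ne (fun v _ h => by rintro rfl; exact h hf)]

lemma pairing_extZero (M : Matrix V V ℤ) (x y : {v : V // v ≠ u} → ℚ) :
    pairing (delMat M u) x y = pairing M (extZero x) (extZero y) := by
  rw [pairing_eq, pairing_eq]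
  have hx : extZero x u = 0 := by simp [extZero]
  have hy : extZero y u = 0 := by simp [extZero]
  rw [sum_ext (u := u) (f := fun v => ∑ w', extZero x v * (M v w' : ℚ) * extZero y w')
    (by simp [hx])]
  refine Finset.sum_congr rfl fun v _ => ?_
  rw [sum_ext (u := u) (f := fun w' => extZero x v.1 * (M v.1 w' : ℚ) * extZero y w')
    (by simp [hy])]
  refine Finset.sum_congr rfl fun w' _ => ?_
  simp [extZero, delMat, v.2, w'.2]

lemma extZero_baseE (l : {v : V // v ≠ u}) : extZero (baseE l) = baseE l.1 := by
  funext v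
  by_cases h : v = u
  · subst h
    have hvl : v ≠ l.1 := fun hh => l.2 hh.symm
    simp [extZero, baseE, Pi.single_apply, hvl]
  · simp [extZero, h, baseE, Pi.single_apply, Subtype.ext_iff]

lemma pairing_single (M : Matrix V V ℤ) (x : V → ℚ) (l : V) :
    pairing M x (baseE l) = ∑ v, x v * (M v l : ℚ) := by
  rw [pairing_eq]
  refine Finset.sum_congr rfl fun v _ => ?_
  rw [Finset.sum_eq_single l] <;> simp [baseE, Pi.single_apply]
  intro b hb; simp [hb]

lemma pairing_self_eq_zero (M : Matrix V V ℤ) (z : V → ℚ)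
    (h : ∀ l, pairing M z (baseE l) = 0) : pairing M z z = 0 := by
  rw [pairing_eq]
  have : ∀ w', ∑ v, z v * (M v w' : ℚ) = 0 := fun w' => by
    rw [← pairing_single M z w']; exact h w'
  rw [Finset.sum_comm]
  refine Finset.sum_eq_zero fun w' _ => ?_
  calc ∑ v, z v * (M v w' : ℚ) * z w' = (∑ v, z v * (M v w' : ℚ)) * z w' := by
        rw [Finset.sum_mul]
    _ = 0 := by rw [this w']; ring

lemma eq_of_pairing (M : Matrix V V ℤ) (hM : NegDefinite M) (x y : V → ℚ)
    (h : ∀ l, pairing M x (baseE l) = pairing M y (baseE l)) : x = y := by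
  by_contra hxy
  have hz : x - y ≠ 0 := sub_ne_zero.mpr hxy
  have := hM _ hz
  have hzero : pairing M (x - y) (x - y) = 0 := by
    apply pairing_self_eq_zero
    intro l
    have := h l
    simp only [pairing_single] at this ⊢
    simp only [Pi.sub_apply, sub_mul, Finset.sum_sub_distrib]
    rw [this]; ring
  linarith
end Aux

section Main
variable {V : Type*} [Fintype V] [DecidableEq V] {u : V}

lemma pairing_neg_left (M : Matrix V V ℤ) (x y : V → ℚ) :
    pairing M (-x) y = -pairing M x y := by
  simp [pairing]

lemma pairing_zero_left (M : Matrix V V ℤ) (y : V → ℚ) :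
    pairing M (0 : V → ℚ) y = 0 := by
  simp [pairing]

lemma pairing_baseE_left (M : Matrix V V ℤ) (a b : V) :
    pairing M (baseE a) (baseE b) = (M a b : ℚ) := by
  rw [pairing_single]
  rw [Finset.sum_eq_single a]
  · simp [baseE]
  · intro b' _ hb'; simp [baseE, Pi.single_apply, hb']
  · simp

lemma negdef_del (M : Matrix V V ℤ) (hM : NegDefinite M) :
    NegDefinite (delMat M u) := by
  intro z hz
  rw [pairing_extZero]
  apply hM
  intro h0
  apply hz
  funext v
  have : extZero z v.1 = 0 := by rw [h0]; rfl
  simpa [extZero, v.2] using this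
end Main

lemma valency_one_row {s : ℕ} (I : Matrix (Fin s) (Fin s) ℤ)
    (hvals : ∀ v w, v ≠ w → I v w = 0 ∨ I v w = 1)
    (u w : Fin s) (hu : valency I u = 1) (hadj : I u w = 1) (hne : w ≠ u)
    (l : Fin s) (hl : l ≠ u) : I u l = if l = w then 1 else 0 := by
  have hwS : w ∈ Finset.univ.filter (fun x => x ≠ u ∧ I u x = 1) := by
    simp [hne, hadj]
  have hS : Finset.univ.filter (fun x => x ≠ u ∧ I u x = 1) = {w} := by
    apply Finset.eq_singleton_iff_unique_mem.mpr
    refine ⟨hwS, fun x hx => ?_⟩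
    have hcard := hu
    unfold valency at hcard
    exact Finset.card_le_one.mp (le_of_eq hcard) x hx w hwS
  by_cases h : l = w
  · simp [h, hadj]
  · simp only [h, if_false]
    rcases hvals u l (fun hh => hl hh.symm) with h0 | h1
    · exact h0
    · exfalso
      apply h
      have : l ∈ Finset.univ.filter (fun x => x ≠ u ∧ I u x = 1) := by simp [hl, h1]
      rw [hS] at this
      simpa using this


/-- The formulas for the restriction operator `R : L'(Γ) → L'(Γ∖u)`, characterized
by `(R(x), l) = (x, i(l))`: `R(E_v^{*,Γ}) = E_v^{*,Γ∖u}` for `v ≠ u`, `R(E_u^{*,Γ}) = 0`,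
`R(E_v^Γ) = E_v^{Γ∖u}` for `v ≠ u`, and `R(E_u^Γ) = -E_w^{*,Γ∖u}` for `w` the vertex
adjacent to the end-vertex `u`. -/
theorem restriction_formulas
    (s : ℕ) (hs : 2 ≤ s) (I : Matrix (Fin s) (Fin s) ℤ)
    (htree : IsPlumbingTree I)
    (u w : Fin s) (hu : valency I u = 1) (hadj : I u w = 1) (hne : w ≠ u)
    (Estar : Fin s → Fin s → ℚ) (hE : IsAntidual I Estar)
    (Estar0 : {v : Fin s // v ≠ u} → {v : Fin s // v ≠ u} → ℚ)
    (hE0 : IsAntidual (delMat I u) Estar0)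
    (R : (Fin s → ℚ) → ({v : Fin s // v ≠ u} → ℚ))
    (hR : ∀ (x : Fin s → ℚ) (l : {v : Fin s // v ≠ u} → ℚ),
      pairing (delMat I u) (R x) l = pairing I x (extZero l)) :
    (∀ v : {v : Fin s // v ≠ u}, R (Estar v.1) = Estar0 v) ∧
    R (Estar u) = 0 ∧
    (∀ v : {v : Fin s // v ≠ u}, R (baseE v.1) = baseE v) ∧
    R (baseE u) = -Estar0 ⟨w, hne⟩ := by
  obtain ⟨⟨hsymm, hneg, hvals, hconn⟩, -⟩ := htree
  have hnegDel : NegDefinite (delMat I u) := negdef_del I hneg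
  have key := eq_of_pairing (delMat I u) hnegDel
  have hRE : ∀ (x : Fin s → ℚ) (l : {v : Fin s // v ≠ u}),
      pairing (delMat I u) (R x) (baseE l) = pairing I x (baseE l.1) := by
    intro x l
    rw [hR, extZero_baseE]
  refine ⟨fun v => ?_, ?_, fun v => ?_, ?_⟩
  · apply key
    intro l
    rw [hRE, hE, hE0]
    rcases eq_or_ne v l with rfl | h
    · simp
    · have h1 : v.1 ≠ l.1 := fun hh => h (Subtype.ext hh)
      simp [h, h1]
  · apply key
    intro l
    rw [hRE, hE, pairing_zero_left]
    have : u ≠ l.1 := fun hh => l.2 hh.symm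
    simp [this]
  · apply key
    intro l
    rw [hRE, pairing_extZero, extZero_baseE, extZero_baseE]
  · apply key
    intro l
    rw [hRE, pairing_baseE_left, pairing_neg_left, hE0,
      valency_one_row I hvals u w hu hadj hne l.1 l.2]
    rcases eq_or_ne l ⟨w, hne⟩ with rfl | h
    · simp
    · have h1 : l.1 ≠ w := fun hh => h (Subtype.ext hh)
      have h2 : (⟨w, hne⟩ : {v : Fin s // v ≠ u}) ≠ l := Ne.symm h
      simp [h1, h2]
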